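/- Let d, N ≥ 1, C_φ ∈ (0,4), C_{φ'}, C_{φ''} > 0, and let φ : ℝ → ℝ be twice differentiable with |φ| ≤ C_φ, |φ'| ≤ C_{φ'}, |φ''| ≤ C_{φ''}. Fix A ∈ ℝ^{N×d}, W ∈ ℝ^{N×N}, a sequence (X_t) in ℝ^d with ‖X_t‖_max ≤ 1, a sequence (S_t) in ℝ^N, and index pairs (i,j), (n,m) with i,n ∈ {1,…,N}, j,m ∈ {1,…,d}. Write z_t^k = (1/d)∑_ℓ φ(A^{kℓ})X_t^ℓ + (1/N)∑_ℓ φ(W^{kℓ})S_t^ℓ. Suppose sequences (S̃_t^{A^{ij},k}) and (S̃_t^{A^{nm},k}) satisfy max_k |S̃_t^{A^{ij},k}| ≤ C_{φ'}/((4−C_φ)d) and max_k |S̃_t^{A^{nm},k}| ≤ C_{φ'}/((4−C_φ)d) for all t, and that (S̃̃_t^{A^{nm},A^{ij},k})_{t≥0} satisfies S̃̃_{t+1}^{A^{nm},A^{ij},k} = σ''(z_t^k)·((δ_{ik}/d)φ'(A^{ij})X_t^j + (1/N)∑_ℓ φ(W^{kℓ})S̃_t^{A^{ij},ℓ})·((δ_{nk}/d)φ'(A^{nm})X_t^m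 + (1/N)∑_ℓ φ(W^{kℓ})S̃_t^{A^{nm},ℓ}) + σ'(z_t^k)·((δ_{ik}δ_{(i,j)=(n,m)}/d)φ''(A^{ij})X_t^j + (1/N)∑_ℓ φ(W^{kℓ})S̃̃_t^{A^{nm},A^{ij},ℓ}). If max_k |S̃̃_0^{A^{nm},A^{ij},k}| ≤ a_{AA,max}/(1−C_φ/4), where a_{AA,max} = C_{φ'}² M_φ²/(10 d²) + C_{φ''}/(4d) and M_φ = 1 + C_φ/(4−C_φ), then max_k |S̃̃_t^{A^{nm},A^{ij},k}| ≤ a_{AA,max}/(1−C_φ/4) for all t ≥ 0. In particular this holds when S̃̃_0 = 0. -/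

import Mathlib

open Finset

noncomputable def sigmoid (y : ℝ) : ℝ := 1 / (1 + Real.exp (-y))

lemma one_add_exp_pos (y : ℝ) : 0 < 1 + Real.exp (-y) := by positivity

lemma sigmoid_hasDerivAt (y : ℝ) :
    HasDerivAt sigmoid (sigmoid y * (1 - sigmoid y)) y := by
  have h1 : HasDerivAt (fun x : ℝ => Real.exp (-x)) (-Real.exp (-y)) y := by
    simpa using (hasDerivAt_neg y).exp
  have h2 : HasDerivAt (fun x : ℝ => 1 + Real.exp (-x)) (-Real.exp (-y)) y :=
    h1.const_add 1
  have h3 := h2.inv (ne_of_gt (one_add_exp_pos y))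
  have he : sigmoid y * (1 - sigmoid y) = -(-Real.exp (-y)) / (1 + Real.exp (-y)) ^ 2 := by
    have := (one_add_exp_pos y).ne'
    simp only [sigmoid]
    field_simp
    ring
  have heq : sigmoid = fun x : ℝ => (1 + Real.exp (-x))⁻¹ := by
    funext x; simp [sigmoid, one_div]
  rw [he, heq]
  exact h3

lemma deriv_sigmoid (y : ℝ) : deriv sigmoid y = sigmoid y * (1 - sigmoid y) :=
  (sigmoid_hasDerivAt y).deriv

lemma deriv2_sigmoid (y : ℝ) :
    deriv (deriv sigmoid) y = sigmoid y * (1 - sigmoid y) * (1 - 2 * sigmoid y) := by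
  have heq : deriv sigmoid = fun x => sigmoid x * (1 - sigmoid x) := funext deriv_sigmoid
  rw [heq]
  have h := (sigmoid_hasDerivAt y).mul ((hasDerivAt_const y (1:ℝ)).sub (sigmoid_hasDerivAt y))
  have := h.deriv
  rw [show (fun x => sigmoid x * (1 - sigmoid x)) = sigmoid * ((fun x => 1) - sigmoid) from rfl, this]; simp only [Pi.sub_apply]; ring

lemma sigmoid_mem (y : ℝ) : 0 < sigmoid y ∧ sigmoid y < 1 := by
  have h := one_add_exp_pos y
  have he := Real.exp_pos (-y)
  constructor
  · exact div_pos one_pos h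
  · rw [sigmoid, div_lt_one h]; linarith

lemma abs_deriv_sigmoid_le (y : ℝ) : |deriv sigmoid y| ≤ 1 / 4 := by
  obtain ⟨h0, h1⟩ := sigmoid_mem y
  rw [deriv_sigmoid, abs_le]
  constructor <;> nlinarith [sq_nonneg (2 * sigmoid y - 1)]

lemma abs_deriv2_sigmoid_le (y : ℝ) : |deriv (deriv sigmoid) y| ≤ 1 / 10 := by
  obtain ⟨h0, h1⟩ := sigmoid_mem y
  rw [deriv2_sigmoid, abs_le]
  set s := sigmoid y
  constructor <;> nlinarith [sq_nonneg (s - 1/5), sq_nonneg (s - 4/5), sq_nonneg (s*(1-s)), mul_pos h0 (by linarith : (0:ℝ) < 1 - s), sq_nonneg (2*s-1)]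

theorem second_derivative_AA_bound
    (d N : ℕ) (hd : 1 ≤ d) (hN : 1 ≤ N)
    (Cφ Cφ' Cφ'' : ℝ) (hCφ0 : 0 < Cφ) (hCφ4 : Cφ < 4) (hCφ' : 0 < Cφ') (hCφ'' : 0 < Cφ'')
    (φ : ℝ → ℝ) (hφdiff : Differentiable ℝ φ) (hφdiff2 : Differentiable ℝ (deriv φ))
    (hφ : ∀ y, |φ y| ≤ Cφ) (hφ' : ∀ y, |deriv φ y| ≤ Cφ')
    (hφ'' : ∀ y, |deriv (deriv φ) y| ≤ Cφ'')
    (A : Fin N → Fin d → ℝ) (W : Fin N → Fin N → ℝ)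
    (X : ℕ → Fin d → ℝ) (hX : ∀ t, ‖X t‖ ≤ 1)
    (S : ℕ → Fin N → ℝ)
    (i n : Fin N) (j m : Fin d)
    (tSij tSnm : ℕ → Fin N → ℝ)
    (htSij : ∀ t k, |tSij t k| ≤ Cφ' / ((4 - Cφ) * d))
    (htSnm : ∀ t k, |tSnm t k| ≤ Cφ' / ((4 - Cφ) * d))
    (tt : ℕ → Fin N → ℝ)
    (hrec : ∀ t k, tt (t + 1) k =
      deriv (deriv sigmoid) ((1 / (d : ℝ)) * ∑ ℓ, φ (A k ℓ) * X t ℓ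
          + (1 / (N : ℝ)) * ∑ ℓ, φ (W k ℓ) * S t ℓ)
        * ((if i = k then (1 : ℝ) else 0) / (d : ℝ) * deriv φ (A i j) * X t j
            + (1 / (N : ℝ)) * ∑ ℓ, φ (W k ℓ) * tSij t ℓ)
        * ((if n = k then (1 : ℝ) else 0) / (d : ℝ) * deriv φ (A n m) * X t m
            + (1 / (N : ℝ)) * ∑ ℓ, φ (W k ℓ) * tSnm t ℓ)
      + deriv sigmoid ((1 / (d : ℝ)) * ∑ ℓ, φ (A k ℓ) * X t ℓ
          + (1 / (N : ℝ)) * ∑ ℓ, φ (W k ℓ) * S t ℓ)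
        * ((if i = k then (1 : ℝ) else 0) * (if (i, j) = (n, m) then (1 : ℝ) else 0) / (d : ℝ)
              * deriv (deriv φ) (A i j) * X t j
            + (1 / (N : ℝ)) * ∑ ℓ, φ (W k ℓ) * tt t ℓ))
    (Mφ aAA : ℝ)
    (hMφ : Mφ = 1 + Cφ / (4 - Cφ))
    (haAA : aAA = Cφ' ^ 2 * Mφ ^ 2 / (10 * (d : ℝ) ^ 2) + Cφ'' / (4 * (d : ℝ)))
    (h0 : ∀ k, |tt 0 k| ≤ aAA / (1 - Cφ / 4)) :
    ∀ t k, |tt t k| ≤ aAA / (1 - Cφ / 4) := by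
  have hσ' := abs_deriv_sigmoid_le
  have hσ'' := abs_deriv2_sigmoid_le
  have hd0 : (0:ℝ) < d := by exact_mod_cast Nat.lt_of_lt_of_le Nat.zero_lt_one hd
  have hN0 : (0:ℝ) < N := by exact_mod_cast Nat.lt_of_lt_of_le Nat.zero_lt_one hN
  have h4C : (0:ℝ) < 4 - Cφ := by linarith
  have hc4 : (0:ℝ) < 1 - Cφ / 4 := by linarith
  have hMpos : 0 < Mφ := by rw [hMφ]; positivity
  set B := aAA / (1 - Cφ / 4) with hB
  have hBnn : 0 ≤ B := le_trans (abs_nonneg _) (h0 i)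
  have hXj : ∀ t (l : Fin d), |X t l| ≤ 1 := by
    intro t l
    calc |X t l| = ‖X t l‖ := (Real.norm_eq_abs _).symm
    _ ≤ ‖X t‖ := norm_le_pi_norm (X t) l
    _ ≤ 1 := hX t
  -- generic sum bound
  have key : ∀ (k : Fin N) (f : Fin N → ℝ) (c : ℝ), 0 ≤ c → (∀ ℓ, |f ℓ| ≤ c) →
      |(1 / (N:ℝ)) * ∑ ℓ, φ (W k ℓ) * f ℓ| ≤ Cφ * c := by
    intro k f c hc hf
    have h1 : |∑ ℓ, φ (W k ℓ) * f ℓ| ≤ (N:ℝ) * (Cφ * c) := by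
      calc |∑ ℓ, φ (W k ℓ) * f ℓ| ≤ ∑ ℓ, |φ (W k ℓ) * f ℓ| :=
            Finset.abs_sum_le_sum_abs _ _
      _ ≤ ∑ _ℓ : Fin N, Cφ * c := by
            apply Finset.sum_le_sum
            intro ℓ _
            rw [abs_mul]
            exact mul_le_mul (hφ _) (hf ℓ) (abs_nonneg _) hCφ0.le
      _ = (N:ℝ) * (Cφ * c) := by simp [mul_comm]
    rw [abs_mul, abs_div, abs_one]
    rw [abs_of_pos hN0]
    rw [div_mul_eq_mul_div, one_mul, div_le_iff₀ hN0]
    linarith [h1]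
  intro t
  induction t with
  | zero => exact h0
  | succ t ih =>
    intro k
    rw [hrec t k]
    set E := Cφ' * Mφ / d with hE
    have hEnn : 0 ≤ E := by positivity
    -- first factor bound
    have hF : ∀ (p : Fin N) (l : Fin d) (g : ℕ → Fin N → ℝ),
        (∀ t k, |g t k| ≤ Cφ' / ((4 - Cφ) * d)) →
        |(if p = k then (1 : ℝ) else 0) / (d : ℝ) * deriv φ (A p l) * X t l
            + (1 / (N : ℝ)) * ∑ ℓ, φ (W k ℓ) * g t ℓ| ≤ E := by
      intro p l g hg
      have h1 : |(if p = k then (1 : ℝ) else 0) / (d : ℝ) * deriv φ (A p l) * X t l| ≤ Cφ' / d := by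
        rw [abs_mul, abs_mul, abs_div]
        have hind : |(if p = k then (1 : ℝ) else 0)| ≤ 1 := by
          split <;> simp
        have : |(if p = k then (1 : ℝ) else 0)| / |(d:ℝ)| ≤ 1 / d := by
          rw [abs_of_pos hd0]
          gcongr
        calc |(if p = k then (1 : ℝ) else 0)| / |(d:ℝ)| * |deriv φ (A p l)| * |X t l|
            ≤ (1 / d) * Cφ' * 1 := by
              apply mul_le_mul (mul_le_mul this (hφ' _) (abs_nonneg _) (by positivity)) (hXj t l) (abs_nonneg _) (by positivity)
        _ = Cφ' / d := by ring
      have h2 : |(1 / (N : ℝ)) * ∑ ℓ, φ (W k ℓ) * g t ℓ| ≤ Cφ * (Cφ' / ((4 - Cφ) * d)) :=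
        key k (g t) _ (by positivity) (hg t)
      calc |(if p = k then (1 : ℝ) else 0) / (d : ℝ) * deriv φ (A p l) * X t l
            + (1 / (N : ℝ)) * ∑ ℓ, φ (W k ℓ) * g t ℓ|
          ≤ |(if p = k then (1 : ℝ) else 0) / (d : ℝ) * deriv φ (A p l) * X t l|
            + |(1 / (N : ℝ)) * ∑ ℓ, φ (W k ℓ) * g t ℓ| := abs_add_le _ _
      _ ≤ Cφ' / d + Cφ * (Cφ' / ((4 - Cφ) * d)) := add_le_add h1 h2
      _ = E := by rw [hE, hMφ]; field_simp
    have hF1 := hF i j tSij htSij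
    have hF2 := hF n m tSnm htSnm
    -- third factor bound
    have h3a : |(if i = k then (1 : ℝ) else 0) * (if (i, j) = (n, m) then (1 : ℝ) else 0) / (d : ℝ)
              * deriv (deriv φ) (A i j) * X t j| ≤ Cφ'' / d := by
      rw [abs_mul, abs_mul, abs_div, abs_mul]
      have hi1 : |(if i = k then (1 : ℝ) else 0)| ≤ 1 := by split <;> simp
      have hi2 : |(if (i, j) = (n, m) then (1 : ℝ) else 0)| ≤ 1 := by split <;> simp
      have hind : |(if i = k then (1 : ℝ) else 0)| * |(if (i, j) = (n, m) then (1 : ℝ) else 0)| ≤ 1 := by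
        calc _ ≤ 1 * 1 := mul_le_mul hi1 hi2 (abs_nonneg _) zero_le_one
        _ = 1 := one_mul 1
      calc |(if i = k then (1 : ℝ) else 0)| * |(if (i, j) = (n, m) then (1 : ℝ) else 0)| / |(d:ℝ)|
              * |deriv (deriv φ) (A i j)| * |X t j|
          ≤ (1 / d) * Cφ'' * 1 := by
            rw [abs_of_pos hd0]
            have hdiv : |(if i = k then (1 : ℝ) else 0)| * |(if (i, j) = (n, m) then (1 : ℝ) else 0)| / (d:ℝ) ≤ 1 / d := by gcongr
            apply mul_le_mul (mul_le_mul hdiv (hφ'' _) (abs_nonneg _) (by positivity)) (hXj t j) (abs_nonneg _) (by positivity)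
      _ = Cφ'' / d := by ring
    have h3b : |(1 / (N : ℝ)) * ∑ ℓ, φ (W k ℓ) * tt t ℓ| ≤ Cφ * B :=
      key k (tt t) B hBnn ih
    have hF3 : |(if i = k then (1 : ℝ) else 0) * (if (i, j) = (n, m) then (1 : ℝ) else 0) / (d : ℝ)
              * deriv (deriv φ) (A i j) * X t j
            + (1 / (N : ℝ)) * ∑ ℓ, φ (W k ℓ) * tt t ℓ| ≤ Cφ'' / d + Cφ * B :=
      (abs_add_le _ _).trans (add_le_add h3a h3b)
    -- combine
    have habc : ∀ x y z : ℝ, |x| ≤ 1/10 → |y| ≤ E → |z| ≤ E → |x*y*z| ≤ 1/10*E*E := by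
      intro x y z hx hy hz
      rw [abs_mul, abs_mul]
      exact mul_le_mul (mul_le_mul hx hy (abs_nonneg _) (by norm_num)) hz (abs_nonneg _)
        (by positivity)
    have hde : ∀ x w : ℝ, |x| ≤ 1/4 → |w| ≤ Cφ'' / d + Cφ * B → |x*w| ≤ 1/4*(Cφ'' / d + Cφ * B) := by
      intro x w hx hw
      rw [abs_mul]
      exact mul_le_mul hx hw (abs_nonneg _) (by norm_num)
    refine le_trans (abs_add_le _ _) ?_
    refine le_trans (add_le_add (habc _ _ _ (hσ'' _) hF1 hF2) (hde _ _ (hσ' _) hF3)) ?_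
    apply le_of_eq
    rw [hE, hB, haAA]
    field_simp
    ring
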